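/- arXiv:1512.06935 — 3 statements merged into one kernel-verified Lean document; each statement's English description precedes it below -/
import Mathlib

section
/- An infinite word x over a finite alphabet is ultimately periodic if and only if r(n+1, x) = r(n, x) + 1 for every sufficiently large n. -/
/-- Number of distinct factors of length `n` of the infinite word `x`. -/
noncomputable def wordComplexity {A : Type*} (x : ℕ → A) (n : ℕ) : ℕ :=
  Set.ncard {w : Fin n → A | ∃ j : ℕ, ∀ i : Fin n, w i = x (j + i)}

/-- Length of the smallest prefix of `x` containing two (possibly overlapping)
occurrences of some word of length `n` (1-based length, word indexed from 0). -/
noncomputable def returnTime {A : Type*} (x : ℕ → A) (n : ℕ) : ℕ :=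
  sInf {m : ℕ | ∃ i : ℕ, i + n < m ∧ ∀ k < n, x (i + k) = x (m - n + k)}

/-- `w` occurs as a factor (finite subword) of the infinite word `x`. -/
def IsFactor {A : Type*} (x : ℕ → A) (w : List A) : Prop :=
  ∃ j : ℕ, ∀ i : Fin w.length, w.get i = x (j + i)

/-- `x` is ultimately periodic. -/
def UltimatelyPeriodic {A : Type*} (x : ℕ → A) : Prop :=
  ∃ T : ℕ, 1 ≤ T ∧ ∃ N : ℕ, ∀ k ≥ N, x (k + T) = x k

/-- `w` is a right special factor of `x`. -/
def RightSpecial {A : Type*} (x : ℕ → A) (w : List A) : Prop :=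
  ∃ a b : A, a ≠ b ∧ IsFactor x (w ++ [a]) ∧ IsFactor x (w ++ [b])

/-- `x` is quasi-Sturmian: `p(n, x) = n + k` for all `n ≥ n₀`. -/
def QuasiSturmian {A : Type*} (x : ℕ → A) : Prop :=
  ∃ k n₀ : ℕ, 0 < k ∧ ∀ n ≥ n₀, wordComplexity x n = n + k



private lemma rt_nonempty {A : Type*} [Fintype A] (x : ℕ → A) (n : ℕ) :
    {m : ℕ | ∃ i : ℕ, i + n < m ∧ ∀ k < n, x (i + k) = x (m - n + k)}.Nonempty := by
  obtain ⟨a, b, hab, hfab⟩ :=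
    Finite.exists_ne_map_eq_of_infinite (fun j : ℕ => fun k : Fin n => x (j + k.val))
  rcases hab.lt_or_gt with hlt | hlt
  · refine ⟨b + n, a, by omega, fun k hk => ?_⟩
    have := congrFun hfab ⟨k, hk⟩
    simpa [Nat.add_sub_cancel] using this
  · refine ⟨a + n, b, by omega, fun k hk => ?_⟩
    have := congrFun hfab ⟨k, hk⟩
    simp only [Nat.add_sub_cancel]
    exact this.symm

private lemma rt_mem {A : Type*} [Fintype A] (x : ℕ → A) (n : ℕ) :
    ∃ i : ℕ, i + n < returnTime x n ∧
      ∀ k < n, x (i + k) = x (returnTime x n - n + k) := by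
  have := Nat.sInf_mem (rt_nonempty x n)
  simpa [returnTime] using this

private lemma rt_le {A : Type*} [Fintype A] (x : ℕ → A) (n m : ℕ)
    (h : ∃ i : ℕ, i + n < m ∧ ∀ k < n, x (i + k) = x (m - n + k)) :
    returnTime x n ≤ m :=
  Nat.sInf_le h

private lemma rt_pos {A : Type*} [Fintype A] (x : ℕ → A) (n : ℕ) :
    n < returnTime x n := by
  obtain ⟨i, hi, -⟩ := rt_mem x n
  omega

private lemma rt_step {A : Type*} [Fintype A] (x : ℕ → A) (n : ℕ) :
    returnTime x n + 1 ≤ returnTime x (n + 1) := by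
  obtain ⟨i, hi, hk⟩ := rt_mem x (n + 1)
  have h1 : returnTime x n ≤ returnTime x (n + 1) - 1 := by
    refine rt_le x n _ ⟨i, by omega, fun k hk' => ?_⟩
    have := hk k (by omega)
    rwa [show returnTime x (n+1) - 1 - n + k = returnTime x (n+1) - (n+1) + k from by omega]
  omega

theorem stmt2 {A : Type*} [Fintype A] (x : ℕ → A) :
    UltimatelyPeriodic x ↔
      ∃ N : ℕ, ∀ n ≥ N, returnTime x (n + 1) = returnTime x n + 1 := by
  constructor
  · rintro ⟨T, hT, N, hper⟩
    have hbd : ∀ n, returnTime x n ≤ n + N + T := by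
      intro n
      refine rt_le x n _ ⟨N, by omega, fun k hk => ?_⟩
      rw [show n + N + T - n + k = (N + k) + T from by omega]
      exact (hper (N + k) (by omega)).symm
    set f : ℕ → ℕ := fun n => returnTime x n - n with hf
    have hmono : Monotone f := by
      apply monotone_nat_of_le_succ
      intro n
      have h1 := rt_step x n
      have h2 := rt_pos x n
      simp only [hf]
      omega
    have hbdd : BddAbove (Set.range f) := by
      refine ⟨N + T, ?_⟩
      rintro _ ⟨n, rfl⟩
      have := hbd n
      simp only [hf]
      omega
    obtain ⟨n₀, hn₀⟩ := Nat.sSup_mem (Set.range_nonempty f) hbdd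
    refine ⟨n₀, fun n hn => ?_⟩
    have h1 : f n = sSup (Set.range f) :=
      le_antisymm (le_csSup hbdd ⟨n, rfl⟩) (hn₀ ▸ hmono hn)
    have h2 : f (n + 1) = sSup (Set.range f) :=
      le_antisymm (le_csSup hbdd ⟨n + 1, rfl⟩) (hn₀ ▸ hmono (by omega : n₀ ≤ n + 1))
    have h3 := rt_pos x n
    have h4 := rt_pos x (n + 1)
    simp only [hf] at h1 h2
    omega
  · rintro ⟨N, h⟩
    set C : ℕ := returnTime x N - N with hCdef
    have hC1 : 1 ≤ C := by have := rt_pos x N; omega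
    have hC : ∀ n ≥ N, returnTime x n = n + C := by
      intro n hn
      induction n, hn using Nat.le_induction with
      | base => have := rt_pos x N; omega
      | succ n hn ih => rw [h n hn, ih]; omega
    have hwit : ∀ n : ℕ, ((rt_mem x (n + N)).choose) < C := by
      intro n
      have hspec := (rt_mem x (n + N)).choose_spec
      have := hC (n + N) (by omega)
      omega
    set g : ℕ → Fin C := fun n => ⟨(rt_mem x (n + N)).choose, hwit n⟩ with hg
    obtain ⟨i, hi⟩ := Finite.exists_infinite_fiber g
    rw [Set.infinite_coe_iff] at hi
    refine ⟨C - i.val, by omega, i.val, fun k hk => ?_⟩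
    obtain ⟨n, hn, hnk⟩ := hi.exists_gt k
    have hgn : (rt_mem x (n + N)).choose = i.val := by
      have : g n = i := hn
      exact congrArg Fin.val this
    obtain ⟨-, hspec⟩ := (rt_mem x (n + N)).choose_spec
    rw [hgn] at hspec
    have hiC : i.val < C := i.isLt
    have heq := hspec (k - i.val) (by omega)
    rw [hC (n + N) (by omega)] at heq
    rw [show i.val + (k - i.val) = k from by omega] at heq
    rw [show n + N + C - (n + N) + (k - i.val) = k + (C - i.val) from by omega] at heq
    exact heq.symm
end

section
/- If an infinite word x over a finite alphabet and a positive integer n satisfy r(n+1, x) ≥ r(n, x) + 2, then r(n+1, x) ≥ 2n + 3. -/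
section Aux

variable {A : Type*}

/-- `x` has period `k` on the integer interval `[a, b]`. -/
def PeriodOn (x : ℕ → A) (a b k : ℕ) : Prop :=
  ∀ r, a ≤ r → r + k ≤ b → x (r + k) = x r

lemma PeriodOn.mono {x : ℕ → A} {a b a' b' k : ℕ} (h : PeriodOn x a b k)
    (ha : a ≤ a') (hb : b' ≤ b) : PeriodOn x a' b' k :=
  fun r hr hrb => h r (le_trans ha hr) (le_trans hrb hb)

lemma PeriodOn.mul {x : ℕ → A} {a b g : ℕ} (h : PeriodOn x a b g) :
    ∀ c r, a ≤ r → r + c * g ≤ b → x (r + c * g) = x r := by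
  intro c
  induction c with
  | zero => intro r _ _; simp
  | succ c ih =>
      intro r hr hrb
      have hle : r + c * g + g ≤ b := by
        have : r + (c + 1) * g = r + c * g + g := by ring
        omega
      have h1 : x (r + c * g + g) = x (r + c * g) := h (r + c * g) (by omega) hle
      have h2 := ih r hr (by omega)
      have e1 : r + (c + 1) * g = r + c * g + g := by ring
      rw [e1, h1, h2]

lemma PeriodOn.eq_of_congr {x : ℕ → A} {a b g : ℕ} (hg : 0 < g) (h : PeriodOn x a b g)
    {r r' : ℕ} (har : a ≤ r) (hrr : r ≤ r') (hb : r' ≤ b) (hmod : (r' - r) % g = 0) :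
    x r' = x r := by
  have hdvd : g ∣ (r' - r) := Nat.dvd_of_mod_eq_zero hmod
  obtain ⟨c, hc⟩ := hdvd
  have he : r' = r + c * g := by
    have h2 : r' - r + r = r' := Nat.sub_add_cancel hrr
    have : g * c + r = r' := by omega
    rw [← this]; ring
  rw [he]
  exact h.mul c r har (he ▸ hb)

lemma fine_wilf_core (x : ℕ → A) :
    ∀ N d e a b, d + e ≤ N → 0 < e → e ≤ d →
      a + d + e ≤ b + 1 + Nat.gcd d e →
      PeriodOn x a b d → PeriodOn x a b e →
      PeriodOn x a b (Nat.gcd d e) := by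
  intro N
  induction N with
  | zero =>
      intro d e a b h1 h2 _ _ _ _
      have h1' : d + e ≤ 0 := h1
      exact absurd h1' (by omega)
  | succ N ih =>
      intro d e a b hN he hed hlen hd hpe
      rcases eq_or_lt_of_le hed with heq | hlt
      · subst heq; rw [Nat.gcd_self]; exact hd
      · set g := Nat.gcd d e with hgdef
        have hgd : g ∣ d := Nat.gcd_dvd_left d e
        have hge : g ∣ e := Nat.gcd_dvd_right d e
        have hgpos : 0 < g := Nat.gcd_pos_of_pos_right d he
        have hgle : g ≤ e := Nat.le_of_dvd he hge
        have hdeg : g ∣ d - e := Nat.dvd_sub hgd hge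
        have hde_pos : 0 < d - e := by omega
        have hdge : e + g ≤ d := by
          have := Nat.le_of_dvd hde_pos hdeg; omega
        have hbe : e ≤ b := by omega
        have hd' : PeriodOn x a (b - e) (d - e) := by
          intro r hr hrb
          have h1 : x (r + d) = x r := hd r hr (by omega)
          have h2 : x (r + (d - e) + e) = x (r + (d - e)) := hpe (r + (d - e)) (by omega) (by omega)
          have h3 : r + (d - e) + e = r + d := by omega
          rw [h3] at h2
          rw [← h2, h1]
        have he' : PeriodOn x a (b - e) e := hpe.mono le_rfl (by omega)
        have hgsub : Nat.gcd (d - e) e = g := Nat.gcd_sub_self_left (le_of_lt hlt)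
        have hrec : PeriodOn x a (b - e) g := by
          rcases le_total e (d - e) with ho | ho
          · have := ih (d - e) e a (b - e) (by omega) he ho
              (by rw [hgsub]; omega) hd' he'
            rwa [hgsub] at this
          · have := ih e (d - e) a (b - e) (by omega) hde_pos ho
              (by rw [Nat.gcd_comm, hgsub]; omega) he' hd'
            rwa [Nat.gcd_comm, hgsub] at this
        intro r hr hrb
        by_cases hcase : r + g ≤ b - e
        · exact hrec r hr hcase
        · have h1 : x (r + g) = x (r + g - e) := by
            have h0 := hpe (r + g - e) (by omega) (by omega)
            have h3 : r + g - e + e = r + g := by omega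
            rw [h3] at h0; exact h0
          by_cases hcase2 : r ≤ b - e
          · have h2 : x r = x (r + g - e) := by
              apply hrec.eq_of_congr hgpos (r := r + g - e) (r' := r) (by omega) (by omega) (by omega)
              · have h4 : r - (r + g - e) = e - g := by omega
                rw [h4]
                exact Nat.mod_eq_zero_of_dvd (Nat.dvd_sub hge dvd_rfl)
            exact h1.trans h2.symm
          · have h2 : x r = x (r - e) := by
              have h0 := hpe (r - e) (by omega) (by omega)
              have h3 : r - e + e = r := by omega
              rw [h3] at h0; exact h0
            have h4 : x (r - e + g) = x (r - e) := hrec (r - e) (by omega) (by omega)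
            have h5 : r + g - e = r - e + g := by omega
            rw [h1, h5, h4, ← h2]

end Aux

theorem stmt3 {A : Type*} [Fintype A] (x : ℕ → A) (n : ℕ) (hn : 1 ≤ n)
    (h : returnTime x n + 2 ≤ returnTime x (n + 1)) :
    2 * n + 3 ≤ returnTime x (n + 1) := by
  by_contra hcon
  push_neg at hcon
  set S1 : Set ℕ :=
    {m : ℕ | ∃ i : ℕ, i + (n + 1) < m ∧ ∀ k < n + 1, x (i + k) = x (m - (n + 1) + k)} with hS1
  have hmdef : returnTime x (n + 1) = sInf S1 := rfl
  set m := returnTime x (n + 1) with hm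
  have hm2 : 2 ≤ m := by omega
  have hS1ne : S1.Nonempty := Nat.nonempty_of_pos_sInf (by omega)
  have hmemm : m ∈ S1 := hmdef ▸ Nat.sInf_mem hS1ne
  obtain ⟨i, hi, hieq⟩ := hmemm
  -- minimality of m
  have hB : ∀ P Q : ℕ, P < Q → Q + (n + 1) + 1 ≤ m →
      (∀ k < n + 1, x (P + k) = x (Q + k)) → False := by
    intro P Q hPQ hQm heq
    have hmemQ : (Q + (n + 1)) ∈ S1 := by
      refine ⟨P, by omega, ?_⟩
      intro k hk
      have e1 : Q + (n + 1) - (n + 1) + k = Q + k := by omega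
      rw [e1]; exact heq k hk
    have := Nat.sInf_le hmemQ
    omega
  -- the set for word length n
  set S0 : Set ℕ := {m : ℕ | ∃ i : ℕ, i + n < m ∧ ∀ k < n, x (i + k) = x (m - n + k)} with hS0
  have hRdef : returnTime x n = sInf S0 := rfl
  set R := returnTime x n with hR
  have hRm : R + 2 ≤ m := h
  have hS0mem : (m - 1) ∈ S0 := by
    refine ⟨i, by omega, ?_⟩
    intro k hk
    have e1 : m - 1 - n + k = m - (n + 1) + k := by omega
    rw [e1]; exact hieq k (by omega)
  have hmemR : R ∈ S0 := hRdef ▸ Nat.sInf_mem ⟨m - 1, hS0mem⟩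
  obtain ⟨p, hpR, hpeq⟩ := hmemR
  have hRn : n + 1 ≤ R := by omega
  set q := R - n with hq
  have hqn : q + n = R := by omega
  have hpq : p < q := by omega
  have hqm : q + n + 2 ≤ m := by omega
  -- the key non-equality
  have hne : x (p + n) ≠ x (q + n) := by
    intro hx
    apply hB p q hpq (by omega)
    intro k hk
    rcases Nat.lt_or_ge k n with h' | h'
    · exact hpeq k h'
    · have hkn : k = n := by omega
      rw [hkn]; exact hx
  set j := m - (n + 1) with hj
  have hjm : j + (n + 1) = m := by omega
  have hij : i < j := by omega
  set d := j - i with hd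
  have hid : i + d = j := by omega
  have hd1 : 1 ≤ d := by omega
  have hjn : j ≤ n + 1 := by omega
  set e := q - p with he
  have hpe : p + e = q := by omega
  have he1 : 1 ≤ e := by omega
  -- periods
  have hper_d : PeriodOn x i (m - 1) d := by
    intro r hr hrb
    have h1 := hieq (r - i) (by omega)
    have e1 : i + (r - i) = r := by omega
    have e2 : j + (r - i) = r + d := by omega
    rw [e1, e2] at h1
    exact h1.symm
  have hper_e : PeriodOn x p (q + n - 1) e := by
    intro r hr hrb
    have h1 := hpeq (r - p) (by omega)
    have e1 : p + (r - p) = r := by omega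
    have e2 : q + (r - p) = r + e := by omega
    rw [e1, e2] at h1
    exact h1.symm
  set a := max p i with ha
  have hamax : a = p ∨ a = i := by
    rcases le_total p i with h' | h'
    · right; rw [ha]; omega
    · left; rw [ha]; omega
  have hap : p ≤ a := le_max_left p i
  have hai : i ≤ a := le_max_right p i
  set b2 := q + n - 1 with hb2
  have hb2q : b2 + 1 = q + n := by omega
  have hper_d' : PeriodOn x a b2 d := hper_d.mono hai (by omega)
  have hper_e' : PeriodOn x a b2 e := hper_e.mono hap le_rfl
  set g := Nat.gcd d e with hg
  have hgpos : 0 < g := Nat.gcd_pos_of_pos_right d he1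
  have hgd : g ∣ d := Nat.gcd_dvd_left d e
  have hge : g ∣ e := Nat.gcd_dvd_right d e
  have hgle : g ≤ e := Nat.le_of_dvd he1 hge
  have hdn : d ≤ n + 1 := by omega
  have hlen : a + d + e ≤ b2 + 1 + g := by
    rcases hamax with h' | h' <;> omega
  have hFW : PeriodOn x a b2 g := by
    rcases le_total e d with ho | ho
    · exact fine_wilf_core x (d + e) d e a b2 le_rfl he1 ho hlen hper_d' hper_e'
    · have := fine_wilf_core x (d + e) e d a b2 (by omega) (by omega) ho
        (by rw [Nat.gcd_comm e d, ← hg]; omega) hper_e' hper_d'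
      rw [Nat.gcd_comm e d, ← hg] at this
      exact this
  have hadb : a + d ≤ b2 + 1 := by
    rcases hamax with h' | h' <;> omega
  -- reduction modulo d into the window [a, a + d - 1]
  have hared : ∀ c r, a ≤ r → r ≤ m - 1 → r ≤ a + c → x r = x (a + (r - a) % d) := by
    intro c
    induction c with
    | zero =>
        intro r h1 h2 h3
        have hra : r = a := by omega
        subst hra
        simp
    | succ c ih =>
        intro r h1 h2 h3
        by_cases hrd : r < a + d
        · have e1 : (r - a) % d = r - a := Nat.mod_eq_of_lt (by omega)
          rw [e1]
          have e2 : a + (r - a) = r := by omega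
          rw [e2]
        · have hstep : x (r - d + d) = x (r - d) := hper_d (r - d) (by omega) (by omega)
          have e3 : r - d + d = r := by omega
          rw [e3] at hstep
          have e4 : (r - a) % d = (r - d - a) % d := by
            have h5 : r - a = (r - d - a) + d := by omega
            rw [h5, Nat.add_mod_right]
          rw [hstep, e4]
          exact ih (r - d) (by omega) (by omega) (by omega)
  have hred : ∀ r, a ≤ r → r ≤ m - 1 → x r = x (a + (r - a) % d) := fun r h1 h2 =>
    hared r r h1 h2 (by omega)
  -- congruence modulo g inside [a, m-1]
  have hCONG : ∀ r r', a ≤ r → r ≤ r' → r' ≤ m - 1 → (r' - r) % g = 0 → x r = x r' := by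
    intro r r' h1 h2 h3 h4
    have hx1 := hred r h1 (by omega)
    have hx2 := hred r' (by omega) h3
    have hr1d : (r - a) % d < d := Nat.mod_lt _ (by omega)
    have hr2d : (r' - a) % d < d := Nat.mod_lt _ (by omega)
    have c1 : a + (r - a) % d ≡ r [MOD g] := by
      have : (r - a) % d ≡ (r - a) [MOD d] := Nat.mod_modEq (r - a) d
      have h5 : (r - a) % d ≡ (r - a) [MOD g] := Nat.ModEq.of_dvd hgd this
      have h6 : a + (r - a) % d ≡ a + (r - a) [MOD g] := Nat.ModEq.add_left a h5
      have e1 : a + (r - a) = r := by omega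
      rwa [e1] at h6
    have c2 : a + (r' - a) % d ≡ r' [MOD g] := by
      have : (r' - a) % d ≡ (r' - a) [MOD d] := Nat.mod_modEq (r' - a) d
      have h5 : (r' - a) % d ≡ (r' - a) [MOD g] := Nat.ModEq.of_dvd hgd this
      have h6 : a + (r' - a) % d ≡ a + (r' - a) [MOD g] := Nat.ModEq.add_left a h5
      have e1 : a + (r' - a) = r' := by omega
      rwa [e1] at h6
    have c3 : r ≡ r' [MOD g] := (Nat.modEq_iff_dvd' h2).mpr (Nat.dvd_of_mod_eq_zero h4)
    have c4 : a + (r - a) % d ≡ a + (r' - a) % d [MOD g] :=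
      (c1.trans c3).trans c2.symm
    have hxw : x (a + (r - a) % d) = x (a + (r' - a) % d) := by
      rcases le_total (a + (r - a) % d) (a + (r' - a) % d) with hle | hle
      · have h7 : g ∣ (a + (r' - a) % d) - (a + (r - a) % d) :=
          (Nat.modEq_iff_dvd' hle).mp c4
        exact (hFW.eq_of_congr hgpos (by omega) hle (by omega)
          (Nat.mod_eq_zero_of_dvd h7)).symm
      · have h7 : g ∣ (a + (r - a) % d) - (a + (r' - a) % d) :=
          (Nat.modEq_iff_dvd' hle).mp c4.symm
        exact hFW.eq_of_congr hgpos (by omega) hle (by omega)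
          (Nat.mod_eq_zero_of_dvd h7)
    rw [hx1, hx2, hxw]
  -- the final contradiction
  apply hne
  apply hCONG (p + n) (q + n) (by rcases hamax with h' | h' <;> omega) (by omega) (by omega)
  have e1 : q + n - (p + n) = e := by omega
  rw [e1]
  exact Nat.mod_eq_zero_of_dvd hge
end

section
/- If s is a quasi-Sturmian word and W is a factor of s, then there exists a positive integer t such that W^t (the concatenation of t copies of W) is not a factor of s. -/
/-!
Let `p = |W|`. If every power `W^t` occurs in `s`, then `s` contains arbitrarily long stretches
with period `p`. Since the complexity grows by exactly one at each large length `n`, there is at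
most one right special factor of length `n`, and it must have period `p`: otherwise every
`p`-periodic factor of length `n` has a unique right extension, so a long `p`-periodic stretch
propagates forever and `s` would be ultimately periodic, contradicting the unbounded complexity.
Hence along a run of consecutive factors without period `p` that is followed by one with period
`p` the extensions are forced and no factor can repeat, so such a run is no longer than the number
`n + k` of factors of length `n`. Two far-apart positions where the period `p` breaks yield, for a
suitable `n`, a longer run.
-/

namespace InfiniteWord

open Set

variable {A : Type*}

def window (s : ℕ → A) (n j : ℕ) : Fin n → A := fun i => s (j + i)

def IsRightSpecial (s : ℕ → A) {n : ℕ} (u : Fin n → A) : Prop :=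
  ∃ j j', window s n j = u ∧ window s n j' = u ∧ s (j + n) ≠ s (j' + n)

def HasPeriod (p : ℕ) {n : ℕ} (u : Fin n → A) : Prop :=
  ∀ (i : ℕ) (h : i + p < n), u ⟨i + p, h⟩ = u ⟨i, by omega⟩

variable {s : ℕ → A} {n p : ℕ}

theorem wordComplexity_eq_ncard_range (s : ℕ → A) (n : ℕ) :
    wordComplexity s n = (range (window s n)).ncard := by
  unfold wordComplexity
  congr 1
  ext w
  simp [window, funext_iff, eq_comm]

theorem hasPeriod_window_iff {j : ℕ} :
    HasPeriod p (window s n j) ↔ ∀ i, i + p < n → s (j + i + p) = s (j + i) := by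
  simp only [HasPeriod, window, add_assoc]

theorem not_hasPeriod_window {d j : ℕ} (hd : s (d + p) ≠ s d) (hjd : j ≤ d)
    (hdn : d + p < j + n) : ¬ HasPeriod p (window s n j) := by
  rw [hasPeriod_window_iff]
  intro h
  have := h (d - j) (by omega)
  rw [Nat.add_sub_cancel' hjd] at this
  exact hd this

theorem _root_.UltimatelyPeriodic.exists_wordComplexity_le (h : UltimatelyPeriodic s) :
    ∃ C, ∀ n, wordComplexity s n ≤ C := by
  classical
  obtain ⟨T, hT, N, hN⟩ := h
  refine ⟨N + T, fun n => ?_⟩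
  have hback : ∀ j, ∃ j' < N + T, window s n j' = window s n j := by
    intro j
    induction j using Nat.strong_induction_on with
    | _ j ih =>
      by_cases hj : j < N + T
      · exact ⟨j, hj, rfl⟩
      obtain ⟨j', hj', heq⟩ := ih (j - T) (by omega)
      refine ⟨j', hj', heq.trans (funext fun i => ?_)⟩
      have := hN (j - T + i) (by omega)
      simp only [window]
      rw [← this]
      congr 1
      omega
  have hsub : range (window s n) ⊆ (Finset.range (N + T)).image (window s n) := by
    rintro _ ⟨j, rfl⟩
    simpa using hback j
  rw [wordComplexity_eq_ncard_range]
  calc (range (window s n)).ncard ≤ ((Finset.range (N + T)).image (window s n)).card := by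
        rw [← ncard_coe_finset]
        exact ncard_le_ncard hsub (Finset.finite_toSet _)
    _ ≤ N + T := Finset.card_image_le.trans (Finset.card_range _).le

theorem _root_.Set.ncard_add_two_le_of_surjOn {α β : Type*} {f : α → β} {S : Set α} {T : Set β}
    (hS : S.Finite) (hf : SurjOn f S T) {x₁ y₁ x₂ y₂ : α} (hx₁ : x₁ ∈ S) (hy₁ : y₁ ∈ S)
    (hx₂ : x₂ ∈ S) (hy₂ : y₂ ∈ S) (hne₁ : x₁ ≠ y₁) (hne₂ : x₂ ≠ y₂) (h₁ : f x₁ = f y₁)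
    (h₂ : f x₂ = f y₂) (hne : f y₁ ≠ f y₂) : T.ncard + 2 ≤ S.ncard := by
  have hy : y₁ ≠ y₂ := fun h => hne (congrArg f h)
  have hsurj : SurjOn f (S \ {y₁, y₂}) T := by
    intro t ht
    obtain ⟨x, hx, rfl⟩ := hf ht
    by_cases hxy₁ : x = y₁
    · subst hxy₁
      exact ⟨x₁, ⟨hx₁, by rintro (rfl | rfl) <;> simp_all⟩, h₁⟩
    by_cases hxy₂ : x = y₂
    · subst hxy₂
      exact ⟨x₂, ⟨hx₂, by rintro (rfl | rfl) <;> simp_all [eq_comm]⟩, h₂⟩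
    exact ⟨x, ⟨hx, by rintro (rfl | rfl) <;> contradiction⟩, rfl⟩
  have hpair : ({y₁, y₂} : Set α) ⊆ S := pair_subset hy₁ hy₂
  have hle : T.ncard ≤ (S \ {y₁, y₂}).ncard :=
    (ncard_le_ncard hsurj (hS.sdiff.image f)).trans (ncard_image_le hS.sdiff)
  have h2 : 2 ≤ S.ncard := ncard_pair hy ▸ ncard_le_ncard hpair hS
  rw [ncard_sdiff hpair, ncard_pair hy] at hle
  omega

theorem eq_of_isRightSpecial (hc : wordComplexity s (n + 1) = wordComplexity s n + 1)
    {u v : Fin n → A} (hu : IsRightSpecial s u) (hv : IsRightSpecial s v) : u = v := by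
  by_contra huv
  obtain ⟨j₁, j₁', rfl, h₁, hne₁⟩ := hu
  obtain ⟨j₂, j₂', rfl, h₂, hne₂⟩ := hv
  have hext : ∀ j j', s (j + n) ≠ s (j' + n) → window s (n + 1) j ≠ window s (n + 1) j' :=
    fun j j' hne heq => hne (congrFun heq (Fin.last n))
  have hsurj : SurjOn Fin.init (range (window s (n + 1))) (range (window s n)) := by
    rintro _ ⟨j, rfl⟩
    exact ⟨window s (n + 1) j, mem_range_self j, rfl⟩
  rw [wordComplexity_eq_ncard_range, wordComplexity_eq_ncard_range] at hc
  have := ncard_add_two_le_of_surjOn (finite_of_ncard_pos (by omega)) hsurj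
    (mem_range_self j₁) (mem_range_self j₁') (mem_range_self j₂) (mem_range_self j₂')
    (hext _ _ hne₁) (hext _ _ hne₂) h₁.symm h₂.symm
    fun h => huv (h₁.symm.trans (h.trans h₂))
  omega

theorem window_add_eq_of_not_isRightSpecial {j j' m : ℕ} (h : window s n j = window s n j')
    (hns : ∀ i < m, ¬ IsRightSpecial s (window s n (j + i))) :
    window s n (j + m) = window s n (j' + m) := by
  induction m with
  | zero => exact h
  | succ m ih =>
    have ih := ih fun i hi => hns i (by omega)
    have hnext : s (j + m + n) = s (j' + m + n) := by
      by_contra hne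
      exact hns m (by omega) ⟨_, _, rfl, ih.symm, hne⟩
    funext ⟨x, hx⟩
    simp only [window]
    rcases Nat.lt_or_ge (x + 1) n with hx' | hx'
    · have := congrFun ih ⟨x + 1, hx'⟩
      simp only [window] at this
      rwa [show j + (m + 1) + x = j + m + (x + 1) by omega,
        show j' + (m + 1) + x = j' + m + (x + 1) by omega]
    · rwa [show j + (m + 1) + x = j + m + n by omega, show j' + (m + 1) + x = j' + m + n by omega]

theorem injOn_window_of_run (Q : (Fin n → A) → Prop) (hQ : ∀ u, Q u → ¬ IsRightSpecial s u)
    {a b : ℕ} (hrun : ∀ j ∈ Icc a b, Q (window s n j)) (hexit : ¬ Q (window s n (b + 1))) :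
    InjOn (window s n) (Icc a b) := by
  have hne : ∀ j ∈ Icc a b, ∀ j' ∈ Icc a b, j < j' → window s n j ≠ window s n j' := by
    rintro j ⟨hja, -⟩ j' ⟨-, hj'b⟩ hjj' heq
    have hshift := window_add_eq_of_not_isRightSpecial (m := b + 1 - j') heq
      fun i hi => hQ _ (hrun _ ⟨by omega, by omega⟩)
    rw [show j' + (b + 1 - j') = b + 1 by omega] at hshift
    exact hexit (hshift ▸ hrun _ ⟨by omega, by omega⟩)
  intro j hj j' hj' heq
  rcases lt_trichotomy j j' with hlt | rfl | hgt
  · exact absurd heq (hne j hj j' hj' hlt)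
  · rfl
  · exact absurd heq.symm (hne j' hj' j hj hgt)

theorem add_period_eq_of_not_isRightSpecial {j : ℕ} (hj : ∀ i < n, s (j + i + p) = s (j + i))
    (hns : ∀ u : Fin n → A, HasPeriod p u → ¬ IsRightSpecial s u) (i : ℕ) :
    s (j + i + p) = s (j + i) := by
  induction i using Nat.strong_induction_on with
  | _ i ih =>
    rcases Nat.lt_or_ge i n with hi | hi
    · exact hj i hi
    obtain ⟨m, rfl⟩ : ∃ m, i = m + n := ⟨i - n, by omega⟩
    have hshift : window s n (j + m + p) = window s n (j + m) := funext fun x => by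
      simp only [window]
      rw [show j + m + p + x = j + (m + x) + p by omega, show j + m + x = j + (m + x) by omega]
      exact ih (m + x) (by omega)
    have hper : HasPeriod p (window s n (j + m)) := hasPeriod_window_iff.2 fun x hx => by
      simpa only [add_assoc] using ih (m + x) (by omega)
    by_contra hne
    refine hns _ hper ⟨j + m + p, j + m, hshift, rfl, ?_⟩
    rwa [show j + m + p + n = j + (m + n) + p by omega, show j + m + n = j + (m + n) by omega]

section ComplexityNPlusK

variable {k n₀ : ℕ}

theorem not_ultimatelyPeriodic_of_wordComplexity_eq
    (hC : ∀ n ≥ n₀, wordComplexity s n = n + k) : ¬ UltimatelyPeriodic s := fun h => by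
  obtain ⟨C, hle⟩ := UltimatelyPeriodic.exists_wordComplexity_le h
  have := hle (n₀ + C + 1)
  rw [hC _ (by omega)] at this
  omega

theorem hasPeriod_of_isRightSpecial (hC : ∀ n ≥ n₀, wordComplexity s n = n + k) (hp : 0 < p)
    (hstretch : ∀ L, ∃ j, ∀ i < L, s (j + i + p) = s (j + i)) (hn : n₀ ≤ n)
    {u : Fin n → A} (hu : IsRightSpecial s u) : HasPeriod p u := by
  by_contra hu'
  have hns : ∀ v : Fin n → A, HasPeriod p v → ¬ IsRightSpecial s v := fun v hv hv' =>
    hu' (eq_of_isRightSpecial (by rw [hC n hn, hC (n + 1) (by omega)]; ring) hv' hu ▸ hv)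
  obtain ⟨j, hj⟩ := hstretch n
  refine not_ultimatelyPeriodic_of_wordComplexity_eq hC ⟨p, hp, j, fun i hi => ?_⟩
  simpa [Nat.add_sub_cancel' hi] using add_period_eq_of_not_isRightSpecial hj hns (i - j)

theorem sub_le_of_run (hC : ∀ n ≥ n₀, wordComplexity s n = n + k) (hk : 0 < k) (hp : 0 < p)
    (hstretch : ∀ L, ∃ j, ∀ i < L, s (j + i + p) = s (j + i)) (hn : n₀ ≤ n) {a b : ℕ}
    (hrun : ∀ j ∈ Icc a b, ¬ HasPeriod p (window s n j))
    (hexit : HasPeriod p (window s n (b + 1))) : b + 1 - a ≤ n + k := by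
  have hinj := injOn_window_of_run (fun u => ¬ HasPeriod p u)
    (fun u hu hsp => hu (hasPeriod_of_isRightSpecial hC hp hstretch hn hsp)) hrun (not_not.2 hexit)
  have hpos : 0 < (range (window s n)).ncard := by
    rw [← wordComplexity_eq_ncard_range, hC n hn]
    omega
  calc b + 1 - a = (Icc a b).ncard := by
        rw [← Nat.card_Icc, ← ncard_coe_finset, Finset.coe_Icc]
    _ = (window s n '' Icc a b).ncard := hinj.ncard_image.symm
    _ ≤ (range (window s n)).ncard :=
        ncard_le_ncard (image_subset_range _ _) (finite_of_ncard_pos hpos)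
    _ = n + k := by rw [← wordComplexity_eq_ncard_range, hC n hn]

theorem exists_bound_periodic_stretch (hC : ∀ n ≥ n₀, wordComplexity s n = n + k) (hk : 0 < k)
    (hp : 0 < p) : ∃ L, ∀ j, ∃ i < L, s (j + i + p) ≠ s (j + i) := by
  classical
  by_contra! hstretch
  have hdefect : ∀ N, ∃ d ≥ N, s (d + p) ≠ s d := by
    by_contra! h
    obtain ⟨N, hN⟩ := h
    exact not_ultimatelyPeriodic_of_wordComplexity_eq hC ⟨p, hp, N, hN⟩
  obtain ⟨d₁, hd₁, hs₁⟩ := hdefect (n₀ + p + k)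
  obtain ⟨d₂, hd₂, hs₂⟩ := hdefect (d₁ + p + k + 1)
  set n := n₀ + p + (d₂ - d₁) with hn
  -- every length-`n` window starting in `[d₁ + p + 1 - n, d₂]` sees the defect at `d₁` or `d₂`,
  -- and this run of windows without period `p` is longer than `n + k`
  have hfar : ∃ m, HasPeriod p (window s n (d₂ + 1 + m)) := by
    obtain ⟨j, hj⟩ := hstretch (d₂ + 1 + n)
    refine ⟨j, hasPeriod_window_iff.2 fun i hi => ?_⟩
    rw [show d₂ + 1 + j + i = j + (d₂ + 1 + i) by omega]
    exact hj _ (by omega)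
  have hrun : ∀ j ∈ Icc (d₁ + p + 1 - n) (d₂ + Nat.find hfar), ¬ HasPeriod p (window s n j) := by
    rintro j ⟨hja, hjb⟩
    rcases le_or_gt j d₁ with h₁ | h₁
    · exact not_hasPeriod_window hs₁ h₁ (by omega)
    rcases le_or_gt j d₂ with h₂ | h₂
    · exact not_hasPeriod_window hs₂ h₂ (by omega)
    obtain ⟨i, rfl⟩ : ∃ i, j = d₂ + 1 + i := ⟨j - (d₂ + 1), by omega⟩
    exact Nat.find_min hfar (by omega)
  have := sub_le_of_run hC hk hp hstretch (by omega) hrun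
    (by simpa only [add_right_comm] using Nat.find_spec hfar)
  omega

end ComplexityNPlusK

theorem _root_.IsFactor.exists_add_length_eq {W : List A} {t : ℕ}
    (h : IsFactor s (List.replicate (t + 1) W).flatten) :
    ∃ j, ∀ i < t * W.length, s (j + i + W.length) = s (j + i) := by
  obtain ⟨j, hj⟩ := h
  set X := (List.replicate (t + 1) W).flatten
  set F := (List.replicate t W).flatten
  have hX : ∀ i < X.length, X[i]? = some (s (j + i)) := fun i hi => by
    rw [List.getElem?_eq_getElem hi]
    exact congrArg some (hj ⟨i, hi⟩)
  have hXl : X = W ++ F := by simp [X, F, List.replicate_succ]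
  have hXr : X = F ++ W := by simp [X, F, List.replicate_succ']
  have hF : F.length = t * W.length := by simp [F]
  refine ⟨j, fun i hi => Option.some_injective _ ?_⟩
  have hshift : X[i + W.length]? = F[i]? := by
    rw [hXl, List.getElem?_append_right (by omega), Nat.add_sub_cancel]
  have hprefix : X[i]? = F[i]? := by rw [hXr, List.getElem?_append_left (by omega)]
  rw [add_assoc, ← hX _ (by rw [hXl, List.length_append]; omega),
    ← hX _ (by rw [hXr, List.length_append]; omega), hshift, hprefix]

end InfiniteWord

theorem stmt4_general {A : Type*} (s : ℕ → A) (hs : QuasiSturmian s)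
    (W : List A) (hW : W ≠ []) :
    ∃ t : ℕ, 1 ≤ t ∧ ¬ IsFactor s ((List.replicate t W).flatten) := by
  obtain ⟨k, n₀, hk, hC⟩ := hs
  have hp : 0 < W.length := List.length_pos_iff.2 hW
  obtain ⟨L, hL⟩ := InfiniteWord.exists_bound_periodic_stretch hC hk hp
  refine ⟨L + 1, by omega, fun hfac => ?_⟩
  obtain ⟨j, hj⟩ := hfac.exists_add_length_eq
  obtain ⟨i, hi, hne⟩ := hL j
  exact hne (hj i (hi.trans_le (Nat.le_mul_of_pos_right L hp)))

theorem stmt4 {A : Type*} [Fintype A] (s : ℕ → A) (hs : QuasiSturmian s)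
    (W : List A) (hW : W ≠ []) (hWf : IsFactor s W) :
    ∃ t : ℕ, 1 ≤ t ∧ ¬ IsFactor s ((List.replicate t W).flatten) :=
  stmt4_general s hs W hW
end
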